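/- arXiv:1609.07005 — 4 statements merged into one kernel-verified Lean document; each statement's English description precedes it below -/
import Mathlib

section
/- Let S = {β₁, …, β_n} be a basis of a finite-dimensional real inner product space V. Let ρ = ∑_{α∈S} n_{ρα} α with all coefficients n_{ρα} > 0, and let α₁, …, α_r ∈ V with α_k = ∑_{α∈S} n_{α_k α} α where all n_{α_k α} ≥ 0. Let c₁, …, c_r ≥ 0 be nonnegative reals. Then the supremum, over all ξ ∈ V with (α, ξ) ≥ 0 for every α ∈ S and (ρ, ξ) > 0, of the quantity ∑_{k=1}^r c_k (α_k, ξ)/(ρ, ξ), equals max_{α∈S} ∑_{k=1}^r c_k n_{α_k α}/n_{ρα}, and this supremum is attained at some element τ_α of the basis of V dual (with respect to (·,·)) to S. -/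
open scoped InnerProductSpace BigOperators

/-- Let `S = {b₁, …, b_n}` be a basis of a real inner product space `V`, with dual
basis `{τ_j}` (w.r.t. the inner product), `ρ = ∑_j n_{ρ j} b_j` with all `n_{ρ j} > 0`,
`α_k = ∑_j n_{α_k j} b_j` with all `n_{α_k j} ≥ 0`, and `c_k ≥ 0`. Then the supremum
over the cone `{ξ : (b_j, ξ) ≥ 0 ∀ j, (ρ, ξ) > 0}` of `∑_k c_k (α_k, ξ)/(ρ, ξ)` equals
`max_j ∑_k c_k n_{α_k j}/n_{ρ j}`, and is attained at some dual basis element `τ_j`. -/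
theorem stmt_16
    {V : Type*} [NormedAddCommGroup V] [InnerProductSpace ℝ V] [FiniteDimensional ℝ V]
    (n : ℕ) (hn : 0 < n) (b : Module.Basis (Fin n) ℝ V)
    (τ : Fin n → V) (hτ : ∀ i j, ⟪τ i, b j⟫_ℝ = if i = j then 1 else 0)
    (ρ : V) (nρ : Fin n → ℝ) (hnρ : ∀ j, 0 < nρ j) (hρ : ρ = ∑ j, nρ j • b j)
    (r : ℕ) (α : Fin r → V) (nα : Fin r → Fin n → ℝ) (hnα : ∀ k j, 0 ≤ nα k j)
    (hα : ∀ k, α k = ∑ j, nα k j • b j)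
    (c : Fin r → ℝ) (hc : ∀ k, 0 ≤ c k) :
    IsGreatest
      {y : ℝ | ∃ ξ : V, (∀ j, 0 ≤ ⟪b j, ξ⟫_ℝ) ∧ 0 < ⟪ρ, ξ⟫_ℝ ∧
        y = ∑ k, c k * ⟪α k, ξ⟫_ℝ / ⟪ρ, ξ⟫_ℝ}
      (Finset.univ.sup'
        (by have : Nonempty (Fin n) := ⟨⟨0, hn⟩⟩; exact Finset.univ_nonempty)
        (fun j => ∑ k, c k * nα k j / nρ j))
    ∧ ∃ j : Fin n,
        ∑ k, c k * ⟪α k, τ j⟫_ℝ / ⟪ρ, τ j⟫_ℝ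
          = Finset.univ.sup'
              (by have : Nonempty (Fin n) := ⟨⟨0, hn⟩⟩; exact Finset.univ_nonempty)
              (fun j => ∑ k, c k * nα k j / nρ j) := by

  have key : ∀ (f : Fin n → ℝ) (ξ : V), ⟪∑ j, f j • b j, ξ⟫_ℝ = ∑ j, f j * ⟪b j, ξ⟫_ℝ := by
    intro f ξ
    rw [sum_inner]
    simp [real_inner_smul_left]
  have hne : (Finset.univ : Finset (Fin n)).Nonempty := by
    have : Nonempty (Fin n) := ⟨⟨0, hn⟩⟩; exact Finset.univ_nonempty
  have hbτ : ∀ i j, ⟪b j, τ i⟫_ℝ = if i = j then 1 else 0 := fun i j => by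
    rw [real_inner_comm]; exact hτ i j
  have hρτ : ∀ i, ⟪ρ, τ i⟫_ℝ = nρ i := by
    intro i; rw [hρ, key]; simp [hbτ]
  have hατ : ∀ k i, ⟪α k, τ i⟫_ℝ = nα k i := by
    intro k i; rw [hα k, key]; simp [hbτ]
  obtain ⟨j0, -, hj0⟩ := Finset.exists_mem_eq_sup' hne (fun j => ∑ k, c k * nα k j / nρ j)
  have hval : (∑ k, c k * ⟪α k, τ j0⟫_ℝ / ⟪ρ, τ j0⟫_ℝ) = ∑ k, c k * nα k j0 / nρ j0 := by
    simp [hρτ, hατ]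
  refine ⟨⟨⟨τ j0, fun j => by rw [hbτ]; split <;> norm_num,
      by rw [hρτ]; exact hnρ j0, ?_⟩, ?_⟩, ⟨j0, by rw [hval, hj0]⟩⟩
  · rw [hval, hj0]
  · rintro y ⟨ξ, hx, hD, rfl⟩
    set x : Fin n → ℝ := fun j => ⟪b j, ξ⟫_ℝ with hxdef
    have hρξ : ⟪ρ, ξ⟫_ℝ = ∑ j, nρ j * x j := by rw [hρ, key]
    have hαξ : ∀ k, ⟪α k, ξ⟫_ℝ = ∑ j, nα k j * x j := fun k => by rw [hα k, key]
    set M := Finset.univ.sup' hne (fun j => ∑ k, c k * nα k j / nρ j) with hMdef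
    rw [← Finset.sum_div, div_le_iff₀ hD]
    calc ∑ k, c k * ⟪α k, ξ⟫_ℝ = ∑ j, (∑ k, c k * nα k j) * x j := by
          simp only [hαξ, Finset.mul_sum]
          rw [Finset.sum_comm]
          simp [Finset.sum_mul, mul_assoc]
      _ ≤ ∑ j, M * (nρ j * x j) := by
          refine Finset.sum_le_sum fun j _ => ?_
          have hmj : (∑ k, c k * nα k j) / nρ j ≤ M := by
            rw [Finset.sum_div]
            exact Finset.le_sup' (fun j => ∑ k, c k * nα k j / nρ j) (Finset.mem_univ j)
          have h1 : (∑ k, c k * nα k j) = ((∑ k, c k * nα k j) / nρ j) * nρ j :=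
            (div_mul_cancel₀ _ (hnρ j).ne').symm
          rw [h1]
          have hx0 : 0 ≤ x j := hx j
          have := mul_le_mul_of_nonneg_right hmj (mul_nonneg (le_of_lt (hnρ j)) hx0)
          calc ((∑ k, c k * nα k j) / nρ j) * nρ j * x j
              = ((∑ k, c k * nα k j) / nρ j) * (nρ j * x j) := by ring
            _ ≤ M * (nρ j * x j) := this
      _ = M * ⟪ρ, ξ⟫_ℝ := by rw [hρξ, Finset.mul_sum]
end

section
/- Let λ₁ ≥ λ₂ ≥ … ≥ λ_n be real numbers. Then for every permutation σ of {1, …, n}, ∑_{i=1}^n |λ_i − λ_{σ(i)}| ≤ ∑_{i=1}^n |λ_i − λ_{n+1−i}|. -/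
open scoped BigOperators

private lemma card_filter_lt (n m : ℕ) :
    (Finset.univ.filter (fun i : Fin n => i.val < m)).card = min m n := by
  rw [Finset.card_filter, Fin.sum_univ_eq_sum_range (fun k => if k < m then 1 else 0),
    ← Finset.card_filter]
  have : (Finset.range n).filter (· < m) = Finset.range (min m n) := by
    ext k; simp; omega
  rw [this, Finset.card_range]

private lemma card_filter_ge (n m : ℕ) :
    (Finset.univ.filter (fun i : Fin n => m ≤ i.val)).card = n - m := by
  rw [Finset.card_filter, Fin.sum_univ_eq_sum_range (fun k => if m ≤ k then 1 else 0),
    ← Finset.card_filter]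
  have : (Finset.range n).filter (m ≤ ·) = Finset.Ico m n := by
    ext k; simp; omega
  rw [this, Nat.card_Ico]

/-- Rearrangement inequality: for `λ₁ ≥ λ₂ ≥ … ≥ λ_n` and any permutation `σ` of
`{1, …, n}`, `∑ᵢ |λ_i − λ_{σ(i)}| ≤ ∑ᵢ |λ_i − λ_{n+1−i}|`. -/
theorem stmt_17 (n : ℕ) (lam : Fin n → ℝ)
    (hmono : ∀ i j : Fin n, i ≤ j → lam j ≤ lam i)
    (σ : Equiv.Perm (Fin n)) :
    ∑ i : Fin n, |lam i - lam (σ i)| ≤ ∑ i : Fin n, |lam i - lam i.rev| := by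
  rcases Nat.eq_zero_or_pos n with h0 | hn
  · subst h0; simp
  set f : ℕ → ℝ := fun k => lam ⟨min k (n-1), by omega⟩ with hfdef
  have hf : ∀ i : Fin n, f i.val = lam i := by
    intro i
    have : (⟨min i.val (n-1), by omega⟩ : Fin n) = i := by
      apply Fin.ext; simp; omega
    simp only [hfdef, this]
  have hfmono : ∀ a b : ℕ, a ≤ b → f b ≤ f a := by
    intro a b hab
    exact hmono _ _ (by simp [Fin.le_def]; omega)
  set d : ℕ → ℝ := fun k => f k - f (k+1) with hddef
  have hd : ∀ k, 0 ≤ d k := fun k => sub_nonneg.2 (hfmono k (k+1) (Nat.le_succ k))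
  -- key decomposition of |lam i - lam j|
  have key : ∀ i j : Fin n, |lam i - lam j| =
      ∑ k ∈ Finset.range n, if min i.val j.val ≤ k ∧ k < max i.val j.val then d k else 0 := by
    intro i j
    have tele : ∀ a b : ℕ, a ≤ b → ∑ k ∈ Finset.Ico a b, d k = f a - f b := by
      intro a b hab
      rw [hddef]
      rw [Finset.sum_Ico_eq_sub _ hab, Finset.sum_range_sub' f, Finset.sum_range_sub' f]
      ring
    rw [← Finset.sum_filter]
    have hfil : (Finset.range n).filter
        (fun k => min i.val j.val ≤ k ∧ k < max i.val j.val) =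
        Finset.Ico (min i.val j.val) (max i.val j.val) := by
      ext k
      have := i.isLt; have := j.isLt
      simp [Finset.mem_Ico]; omega
    rw [hfil]
    rcases le_total i.val j.val with hij | hij
    · have h1 : lam j ≤ lam i := hmono i j hij
      rw [abs_of_nonneg (by linarith), min_eq_left hij, max_eq_right hij,
        tele _ _ hij, hf, hf]
    · have h1 : lam i ≤ lam j := hmono j i hij
      rw [abs_of_nonpos (by linarith), min_eq_right hij, max_eq_left hij,
        tele _ _ hij, hf, hf]
      ring
  -- convert each side
  have conv : ∀ (τ : Equiv.Perm (Fin n)),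
      ∑ i : Fin n, |lam i - lam (τ i)| = ∑ k ∈ Finset.range n,
        ((Finset.univ.filter (fun i : Fin n =>
          min i.val ((τ i).val) ≤ k ∧ k < max i.val ((τ i).val))).card : ℝ) * d k := by
    intro τ
    rw [Finset.sum_congr rfl (fun i _ => key i (τ i)), Finset.sum_comm]
    refine Finset.sum_congr rfl (fun k _ => ?_)
    rw [← Finset.sum_filter, Finset.sum_const, nsmul_eq_mul]
  have hrevperm : ∑ i : Fin n, |lam i - lam i.rev| =
      ∑ i : Fin n, |lam i - lam ((Fin.revPerm : Equiv.Perm (Fin n)) i)| := by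
    simp [Fin.revPerm]
  rw [conv σ, hrevperm, conv Fin.revPerm]
  refine Finset.sum_le_sum (fun k hk => ?_)
  have hkn : k < n := Finset.mem_range.1 hk
  refine mul_le_mul_of_nonneg_right ?_ (hd k)
  rw [Nat.cast_le]
  set m : ℕ := min (k+1) (n-1-k) with hm
  have hrevval : ∀ i : Fin n, ((Fin.revPerm i : Fin n) : ℕ) = n - 1 - i.val := by
    intro i; simp [Fin.revPerm, Fin.val_rev]; omega
  -- rev card = m + m
  have hrevcard : (Finset.univ.filter (fun i : Fin n =>
      min i.val ((Fin.revPerm i : Fin n)).val ≤ k ∧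
      k < max i.val ((Fin.revPerm i : Fin n)).val)).card = m + m := by
    have heq : Finset.univ.filter (fun i : Fin n =>
        min i.val ((Fin.revPerm i : Fin n)).val ≤ k ∧
        k < max i.val ((Fin.revPerm i : Fin n)).val) =
        Finset.univ.filter (fun i : Fin n => i.val < m) ∪
        Finset.univ.filter (fun i : Fin n => n - m ≤ i.val) := by
      rw [← Finset.filter_or]
      apply Finset.filter_congr
      intro i _
      have := i.isLt
      rw [hrevval i]
      simp only [hm]
      constructor
      · rintro ⟨h1, h2⟩; omega
      · intro h; omega
    rw [heq, Finset.card_union_of_disjoint, card_filter_lt, card_filter_ge]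
    · omega
    · rw [Finset.disjoint_filter]
      intro i _ h1 h2
      omega
  rw [hrevcard]
  -- σ card ≤ m + m
  have heqσ : Finset.univ.filter (fun i : Fin n =>
      min i.val ((σ i).val) ≤ k ∧ k < max i.val ((σ i).val)) =
      Finset.univ.filter (fun i : Fin n => i.val ≤ k ∧ k < (σ i).val) ∪
      Finset.univ.filter (fun i : Fin n => (σ i).val ≤ k ∧ k < i.val) := by
    rw [← Finset.filter_or]
    apply Finset.filter_congr
    intro i _
    constructor
    · rintro ⟨h1, h2⟩; omega
    · rintro (⟨h1, h2⟩ | ⟨h1, h2⟩) <;> omega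
  rw [heqσ]
  refine le_trans (Finset.card_union_le _ _) ?_
  have hA : (Finset.univ.filter (fun i : Fin n => i.val ≤ k ∧ k < (σ i).val)).card ≤ m := by
    refine le_min ?_ ?_
    · calc _ ≤ (Finset.univ.filter (fun i : Fin n => i.val < k+1)).card := by
            refine Finset.card_le_card ?_
            intro i hi
            simp only [Finset.mem_filter] at hi ⊢
            exact ⟨hi.1, by omega⟩
        _ = min (k+1) n := card_filter_lt n (k+1)
        _ ≤ k+1 := min_le_left _ _
    · calc _ ≤ (Finset.univ.filter (fun j : Fin n => k+1 ≤ j.val)).card := by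
            refine Finset.card_le_card_of_injOn (fun i => σ i) ?_ (σ.injective.injOn)
            intro i hi
            simp only [Finset.mem_coe, Finset.mem_filter] at hi ⊢
            exact ⟨Finset.mem_univ _, by omega⟩
        _ = n - (k+1) := card_filter_ge n (k+1)
        _ ≤ n - 1 - k := by omega
  have hB : (Finset.univ.filter (fun i : Fin n => (σ i).val ≤ k ∧ k < i.val)).card ≤ m := by
    refine le_min ?_ ?_
    · calc _ ≤ (Finset.univ.filter (fun j : Fin n => j.val < k+1)).card := by
            refine Finset.card_le_card_of_injOn (fun i => σ i) ?_ (σ.injective.injOn)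
            intro i hi
            simp only [Finset.mem_coe, Finset.mem_filter] at hi ⊢
            exact ⟨Finset.mem_univ _, by omega⟩
        _ = min (k+1) n := card_filter_lt n (k+1)
        _ ≤ k+1 := min_le_left _ _
    · calc _ ≤ (Finset.univ.filter (fun i : Fin n => k+1 ≤ i.val)).card := by
            refine Finset.card_le_card ?_
            intro i hi
            simp only [Finset.mem_filter] at hi ⊢
            exact ⟨hi.1, by omega⟩
        _ = n - (k+1) := card_filter_ge n (k+1)
        _ ≤ n - 1 - k := by omega
  omega
end

section
/- Let λ₁, …, λ_n be real numbers and σ a permutation of {1, …, n}. For every factorization σ = τ₁ · τ₂ ⋯ τ_m of σ as a product of transpositions τ_j = (a_j, b_j), the total weight satisfies ∑_{j=1}^m |λ_{a_j} − λ_{b_j}| ≥ (1/2) ∑_{i=1}^n |λ_i − λ_{σ(i)}|. -/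
open scoped BigOperators

lemma swap_step {n : ℕ} (lam : Fin n → ℝ) (a b : Fin n) (hab : a ≠ b)
    (τ : Equiv.Perm (Fin n)) :
    ∑ i : Fin n, |lam i - lam ((Equiv.swap a b * τ) i)|
      ≤ 2 * |lam a - lam b| + ∑ i : Fin n, |lam i - lam (τ i)| := by
  have h1 : ∀ i : Fin n, |lam i - lam ((Equiv.swap a b * τ) i)|
      ≤ |lam i - lam (τ i)| + |lam (τ i) - lam (Equiv.swap a b (τ i))| := by
    intro i
    simpa using abs_sub_le (lam i) (lam (τ i)) (lam (Equiv.swap a b (τ i)))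
  calc ∑ i : Fin n, |lam i - lam ((Equiv.swap a b * τ) i)|
      ≤ ∑ i : Fin n, (|lam i - lam (τ i)| + |lam (τ i) - lam (Equiv.swap a b (τ i))|) :=
        Finset.sum_le_sum fun i _ => h1 i
    _ = (∑ i : Fin n, |lam i - lam (τ i)|)
        + ∑ i : Fin n, |lam (τ i) - lam (Equiv.swap a b (τ i))| := Finset.sum_add_distrib
    _ = (∑ i : Fin n, |lam i - lam (τ i)|)
        + ∑ j : Fin n, |lam j - lam (Equiv.swap a b j)| := by
        congr 1
        exact Equiv.sum_comp τ (fun j => |lam j - lam (Equiv.swap a b j)|)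
    _ = 2 * |lam a - lam b| + ∑ i : Fin n, |lam i - lam (τ i)| := by
        have : ∑ j : Fin n, |lam j - lam (Equiv.swap a b j)|
            = ∑ j ∈ ({a, b} : Finset (Fin n)), |lam j - lam (Equiv.swap a b j)| := by
          refine (Finset.sum_subset (Finset.subset_univ _) ?_).symm
          intro j _ hj
          simp only [Finset.mem_insert, Finset.mem_singleton, not_or] at hj
          rw [Equiv.swap_apply_of_ne_of_ne hj.1 hj.2]
          simp
        rw [this, Finset.sum_pair hab, Equiv.swap_apply_left, Equiv.swap_apply_right,
          abs_sub_comm (lam b) (lam a)]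
        ring

lemma aux_list {n : ℕ} (lam : Fin n → ℝ) :
    ∀ l : List (Fin n × Fin n), (∀ p ∈ l, p.1 ≠ p.2) →
      ∑ i : Fin n, |lam i - lam ((l.map fun p => Equiv.swap p.1 p.2).prod i)|
        ≤ 2 * (l.map fun p => |lam p.1 - lam p.2|).sum
  | [], _ => by simp
  | (a, b) :: t, h => by
      have ht := aux_list lam t (fun p hp => h p (List.mem_cons_of_mem _ hp))
      have hab : a ≠ b := h (a, b) List.mem_cons_self
      simp only [List.map_cons, List.prod_cons, List.sum_cons]
      calc ∑ i : Fin n, |lam i - lam ((Equiv.swap a b *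
              (t.map fun p => Equiv.swap p.1 p.2).prod) i)|
          ≤ 2 * |lam a - lam b|
            + ∑ i : Fin n, |lam i - lam (((t.map fun p => Equiv.swap p.1 p.2).prod) i)| :=
            swap_step lam a b hab _
        _ ≤ 2 * |lam a - lam b| + 2 * (t.map fun p => |lam p.1 - lam p.2|).sum := by
            linarith
        _ = 2 * (|lam a - lam b| + (t.map fun p => |lam p.1 - lam p.2|).sum) := by ring

/-- For any factorization `σ = τ₁ ⋯ τ_m` of a permutation into transpositions
`τ_j = (a_j, b_j)`, the total weight satisfies
`∑_j |λ_{a_j} − λ_{b_j}| ≥ (1/2) ∑_i |λ_i − λ_{σ(i)}|`. -/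
theorem stmt_18 (n : ℕ) (lam : Fin n → ℝ) (σ : Equiv.Perm (Fin n))
    (l : List (Fin n × Fin n)) (hl : ∀ p ∈ l, p.1 ≠ p.2)
    (hfact : (l.map fun p => Equiv.swap p.1 p.2).prod = σ) :
    (1 / 2) * ∑ i : Fin n, |lam i - lam (σ i)|
      ≤ (l.map fun p => |lam p.1 - lam p.2|).sum := by
  have h := aux_list lam l hl
  rw [hfact] at h
  linarith
end

section
/- Let λ₁ ≥ λ₂ ≥ … ≥ λ_n be real numbers. Define, for a permutation σ of {1, …, n}, d(σ) as the minimum over all factorizations σ = τ₁ ⋯ τ_m into transpositions τ_j = (a_j, b_j) of the total weight ∑_{j=1}^m |λ_{a_j} − λ_{b_j}|. Then the reversal permutation w₀(i) = n + 1 − i satisfies d(w₀) = (1/2) ∑_{k=1}^n |λ_k − λ_{n+1−k}|, and d(σ) ≤ d(w₀) for every permutation σ; that is, the diameter of the Cayley graph of S_n generated by all transpositions, with edge between σ and σ·(i,j) weighted by |λ_i − λ_j|, equals (1/2) ∑_{k=1}^n |λ_k − λ_{n+1−k}|. -/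
open scoped BigOperators

/-- The distance from the identity to `σ` in the Cayley graph of the symmetric
group generated by all transpositions, where the edge corresponding to the
transposition `(a, b)` has weight `|λ_a − λ_b|`: the minimum total weight of a
factorization of `σ` into transpositions. -/
noncomputable def cayleyDist (n : ℕ) (lam : Fin n → ℝ) (σ : Equiv.Perm (Fin n)) : ℝ :=
  sInf {s : ℝ | ∃ l : List (Fin n × Fin n), (∀ p ∈ l, p.1 ≠ p.2) ∧
    (l.map fun p => Equiv.swap p.1 p.2).prod = σ ∧
    s = (l.map fun p => |lam p.1 - lam p.2|).sum}

namespace Stmt19Aux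
open Finset

lemma pair_lemma {n : ℕ} {σ : Equiv.Perm (Fin n)} (hσ : σ ≠ 1) :
    ∃ a b : Fin n, a < b ∧ σ b ≤ a ∧ b ≤ σ a := by
  classical
  -- there is b with σ b < b
  have hex : ∃ b : Fin n, σ b < b := by
    by_contra h
    push_neg at h
    apply hσ
    have hsum : ∑ k : Fin n, ((σ k) : ℕ) = ∑ k : Fin n, (k : ℕ) := Equiv.sum_comp σ _
    have hall := (Finset.sum_eq_sum_iff_of_le
      (f := fun k : Fin n => (k : ℕ)) (g := fun k => ((σ k : Fin n) : ℕ))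
      (fun i _ => Fin.le_def.mp (h i))).mp hsum.symm
    ext k
    simpa using (hall k (mem_univ k)).symm
  set T : Finset (Fin n) := univ.filter (fun k => σ k < k) with hT
  have hTne : T.Nonempty := by
    obtain ⟨b, hb⟩ := hex
    exact ⟨b, by simp [hT, hb]⟩
  set b := T.min' hTne with hbdef
  have hbT : σ b < b := by
    exact (Finset.mem_filter.mp (T.min'_mem hTne)).2
  have hbmin : ∀ k : Fin n, k < b → k ≤ σ k := by
    intro k hk
    by_contra hc
    push_neg at hc
    exact absurd (T.min'_le k (by simp [hT, hc])) (not_le.mpr hk)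
  -- U : candidates for a
  set U : Finset (Fin n) := univ.filter (fun k => k < b ∧ b ≤ σ k) with hU
  have hUne : U.Nonempty := by
    by_contra h
    rw [Finset.not_nonempty_iff_eq_empty] at h
    have h' : ∀ k : Fin n, k < b → σ k < b := by
      intro k hk
      by_contra hc
      push_neg at hc
      have : k ∈ U := by simp [hU, hk, hc]
      simp [h] at this
    have hmaps : ∀ k ∈ Iic b, σ k ∈ Iio b := by
      intro k hk
      rw [mem_Iic] at hk
      rw [mem_Iio]
      rcases lt_or_eq_of_le hk with h1 | h1
      · exact h' k h1
      · rw [h1]; exact hbT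
    have hcard := Finset.card_le_card_of_injOn σ hmaps (σ.injective.injOn)
    rw [Fin.card_Iic, Fin.card_Iio] at hcard
    omega
  set a := U.max' hUne with hadef
  have haU : a < b ∧ b ≤ σ a := by
    exact (Finset.mem_filter.mp (U.max'_mem hUne)).2
  have hamax : ∀ k : Fin n, a < k → k < b → σ k < b := by
    intro k h1 h2
    by_contra hc
    push_neg at hc
    exact absurd (U.le_max' k (by simp [hU, h2, hc])) (not_le.mpr h1)
  refine ⟨a, b, haU.1, ?_, haU.2⟩
  by_contra hc
  push_neg at hc
  have hmaps : ∀ k ∈ Ioc a b, σ k ∈ Ioo a b := by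
    intro k hk
    rw [mem_Ioc] at hk
    rw [mem_Ioo]
    rcases lt_or_eq_of_le hk.2 with h1 | h1
    · exact ⟨lt_of_lt_of_le hk.1 (hbmin k h1), hamax k hk.1 h1⟩
    · rw [h1]; exact ⟨hc, hbT⟩
  have hcard := Finset.card_le_card_of_injOn σ hmaps (σ.injective.injOn)
  rw [Fin.card_Ioc, Fin.card_Ioo] at hcard
  have : (a : ℕ) < b := haU.1
  omega


variable {n : ℕ}

noncomputable def Phi (lam : Fin n → ℝ) (σ : Equiv.Perm (Fin n)) : ℝ :=
  ∑ k : Fin n, |lam k - lam (σ k)|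

lemma Phi_one (lam : Fin n → ℝ) : Phi lam 1 = 0 := by
  simp [Phi]

lemma Phi_swap (lam : Fin n → ℝ) (a b : Fin n) :
    Phi lam (Equiv.swap a b) = 2 * |lam a - lam b| := by
  rcases eq_or_ne a b with rfl | hab
  · simp [Phi]
  · unfold Phi
    rw [← Finset.sum_subset (Finset.subset_univ ({a, b} : Finset (Fin n)))
      (by intro x _ hx
          simp only [mem_insert, mem_singleton, not_or] at hx
          rw [Equiv.swap_apply_of_ne_of_ne hx.1 hx.2, sub_self, abs_zero])]
    rw [Finset.sum_pair hab]
    rw [Equiv.swap_apply_left, Equiv.swap_apply_right, abs_sub_comm (lam b)]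
    ring

lemma Phi_mul_swap_le (lam : Fin n → ℝ) (a b : Fin n) (σ : Equiv.Perm (Fin n)) :
    Phi lam (Equiv.swap a b * σ) ≤ 2 * |lam a - lam b| + Phi lam σ := by
  have h1 : Phi lam (Equiv.swap a b * σ) ≤
      Phi lam σ + ∑ k : Fin n, |lam (σ k) - lam (Equiv.swap a b (σ k))| := by
    unfold Phi
    rw [← Finset.sum_add_distrib]
    apply Finset.sum_le_sum
    intro k _
    simpa using abs_sub_le (lam k) (lam (σ k)) (lam (Equiv.swap a b (σ k)))
  have h2 : ∑ k : Fin n, |lam (σ k) - lam (Equiv.swap a b (σ k))|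
      = Phi lam (Equiv.swap a b) :=
    Equiv.sum_comp σ (fun j => |lam j - lam (Equiv.swap a b j)|)
  rw [h2, Phi_swap] at h1
  linarith

lemma Phi_le_two_weight (lam : Fin n → ℝ) (l : List (Fin n × Fin n)) :
    Phi lam (l.map fun p => Equiv.swap p.1 p.2).prod
      ≤ 2 * (l.map fun p => |lam p.1 - lam p.2|).sum := by
  induction l with
  | nil => simp [Phi_one]
  | cons p t ih =>
      simp only [List.map_cons, List.prod_cons, List.sum_cons]
      calc Phi lam (Equiv.swap p.1 p.2 * (t.map fun p => Equiv.swap p.1 p.2).prod)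
          ≤ 2 * |lam p.1 - lam p.2| + Phi lam (t.map fun p => Equiv.swap p.1 p.2).prod :=
            Phi_mul_swap_le lam p.1 p.2 _
        _ ≤ 2 * |lam p.1 - lam p.2| + 2 * (t.map fun p => |lam p.1 - lam p.2|).sum := by
            linarith
        _ = 2 * (|lam p.1 - lam p.2| + (t.map fun p => |lam p.1 - lam p.2|).sum) := by ring

lemma sum_split {M : Type*} [AddCommMonoid M] (a b : Fin n) (hne : a ≠ b) (f : Fin n → M) :
    ∑ k : Fin n, f k = (∑ k ∈ ({a, b} : Finset (Fin n))ᶜ, f k) + f a + f b := by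
  rw [← Finset.sum_compl_add_sum ({a, b} : Finset (Fin n)) f, Finset.sum_pair hne, add_assoc]

lemma exists_factorization (lam : Fin n → ℝ)
    (hmono : ∀ i j : Fin n, i ≤ j → lam j ≤ lam i) :
    ∀ fuel : ℕ, ∀ σ : Equiv.Perm (Fin n),
      (∑ k : Fin n, Nat.dist ((σ k) : ℕ) (k : ℕ)) < fuel →
      ∃ l : List (Fin n × Fin n), (∀ p ∈ l, p.1 ≠ p.2) ∧
        (l.map fun p => Equiv.swap p.1 p.2).prod = σ ∧
        (l.map fun p => |lam p.1 - lam p.2|).sum = (1/2) * Phi lam σ := by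
  intro fuel
  induction fuel with
  | zero => intro σ h; omega
  | succ m ih =>
    intro σ hN
    by_cases hσ : σ = 1
    · subst hσ; exact ⟨[], by simp, by simp, by simp [Phi_one]⟩
    obtain ⟨a, b, hab, hba, hab2⟩ := pair_lemma hσ
    have hne : a ≠ b := ne_of_lt hab
    set σ' := σ * Equiv.swap a b with hσ'
    have ha' : σ' a = σ b := by simp [hσ']
    have hb' : σ' b = σ a := by simp [hσ']
    have hother : ∀ k, k ≠ a → k ≠ b → σ' k = σ k := by
      intro k h1 h2
      simp [hσ', Equiv.swap_apply_of_ne_of_ne h1 h2]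
    have hcompl : ∀ (g : Fin n → Fin n → ℝ) (h : ∀ k, k ≠ a → k ≠ b → σ' k = σ k), True := fun _ _ => trivial
    have hvab : (a : ℕ) < (b : ℕ) := hab
    have hvba : ((σ b) : ℕ) ≤ (a : ℕ) := hba
    have hvab2 : (b : ℕ) ≤ ((σ a) : ℕ) := hab2
    have l1 : lam a ≤ lam (σ b) := hmono _ _ hba
    have l2 : lam (σ a) ≤ lam b := hmono _ _ hab2
    have l3 : lam b ≤ lam a := hmono _ _ (le_of_lt hab)
    -- N decreases
    have hNlt : (∑ k : Fin n, Nat.dist ((σ' k) : ℕ) (k : ℕ))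
        < ∑ k : Fin n, Nat.dist ((σ k) : ℕ) (k : ℕ) := by
      rw [sum_split a b hne (fun k => Nat.dist ((σ' k) : ℕ) (k : ℕ)),
          sum_split a b hne (fun k => Nat.dist ((σ k) : ℕ) (k : ℕ))]
      have hc : ∑ k ∈ ({a, b} : Finset (Fin n))ᶜ, Nat.dist ((σ' k) : ℕ) (k : ℕ)
          = ∑ k ∈ ({a, b} : Finset (Fin n))ᶜ, Nat.dist ((σ k) : ℕ) (k : ℕ) := by
        apply Finset.sum_congr rfl
        intro k hk
        simp only [Finset.mem_compl, Finset.mem_insert, Finset.mem_singleton, not_or] at hk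
        rw [hother k hk.1 hk.2]
      rw [hc, ha', hb']
      simp only [Nat.dist]
      omega
    -- Phi relation
    have hPhi : Phi lam σ' = Phi lam σ - 2 * (lam a - lam b) := by
      unfold Phi
      rw [sum_split a b hne (fun k => |lam k - lam (σ' k)|),
          sum_split a b hne (fun k => |lam k - lam (σ k)|)]
      have hc : ∑ k ∈ ({a, b} : Finset (Fin n))ᶜ, |lam k - lam (σ' k)|
          = ∑ k ∈ ({a, b} : Finset (Fin n))ᶜ, |lam k - lam (σ k)| := by
        apply Finset.sum_congr rfl
        intro k hk
        simp only [Finset.mem_compl, Finset.mem_insert, Finset.mem_singleton, not_or] at hk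
        rw [hother k hk.1 hk.2]
      rw [hc, ha', hb']
      rw [abs_of_nonpos (by linarith : lam a - lam (σ b) ≤ 0),
          abs_of_nonneg (by linarith : 0 ≤ lam b - lam (σ a)),
          abs_of_nonneg (by linarith : 0 ≤ lam a - lam (σ a)),
          abs_of_nonpos (by linarith : lam b - lam (σ b) ≤ 0)]
      ring
    obtain ⟨l', hl1, hl2, hl3⟩ := ih σ' (by omega)
    refine ⟨l' ++ [(a, b)], ?_, ?_, ?_⟩
    · intro p hp
      rcases List.mem_append.mp hp with h | h
      · exact hl1 p h
      · simp only [List.mem_singleton] at h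
        subst h
        exact hne
    · rw [List.map_append, List.prod_append, hl2]
      simp [hσ', mul_assoc]
    · rw [List.map_append, List.sum_append, hl3, hPhi]
      simp only [List.map_cons, List.map_nil, List.sum_cons, List.sum_nil]
      rw [abs_of_nonneg (by linarith : (0:ℝ) ≤ lam a - lam b)]
      ring


variable {n : ℕ}

lemma sup_val_le (i : ℕ) (x y : Fin n) :
    (((x ⊔ y) : Fin n) : ℕ) ≤ i ↔ (x : ℕ) ≤ i ∧ (y : ℕ) ≤ i := by
  rcases le_total x y with h | h
  · rw [sup_eq_right.mpr h]
    have := Fin.le_def.mp h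
    omega
  · rw [sup_eq_left.mpr h]
    have := Fin.le_def.mp h
    omega

lemma count_le (σ : Equiv.Perm (Fin n)) (i : ℕ) (hi : i < n) :
    (univ.filter fun k : Fin n => (((k ⊔ Fin.revPerm k) : Fin n) : ℕ) ≤ i).card ≤
    (univ.filter fun k : Fin n => (((k ⊔ σ k) : Fin n) : ℕ) ≤ i).card := by
  classical
  simp only [sup_val_le]
  set X := univ.filter (fun k : Fin n => (k : ℕ) ≤ i) with hXdef
  set Y := univ.filter (fun k : Fin n => ((σ k : Fin n) : ℕ) ≤ i) with hYdef
  have hXY : univ.filter (fun k : Fin n => (k : ℕ) ≤ i ∧ ((σ k : Fin n) : ℕ) ≤ i) = X ∩ Y :=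
    Finset.filter_and _ _ _
  have hX : X.card = i + 1 := by
    have : X = Iic (⟨i, hi⟩ : Fin n) := by
      ext k
      simp [hXdef, Finset.mem_Iic, Fin.le_def]
    rw [this, Fin.card_Iic]
  have hY : Y.card = i + 1 := by
    have : Y = X.map σ.symm.toEmbedding := by
      ext k
      simp [Finset.mem_map_equiv, hXdef, hYdef]
    rw [this, Finset.card_map, hX]
  have hcui := Finset.card_union_add_card_inter X Y
  have hun : (X ∪ Y).card ≤ n := by
    refine le_trans (Finset.card_le_univ _) ?_
    simp
  have hLHS : (univ.filter fun k : Fin n =>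
      (k : ℕ) ≤ i ∧ ((Fin.revPerm k : Fin n) : ℕ) ≤ i).card ≤ (Finset.Icc (n-1-i) i).card := by
    refine Finset.card_le_card_of_injOn
      (s := univ.filter fun k : Fin n => (k : ℕ) ≤ i ∧ ((Fin.revPerm k : Fin n) : ℕ) ≤ i)
      (t := Finset.Icc (n-1-i) i) (fun k => (k : ℕ)) ?_ ?_
    · intro k hk
      simp only [Finset.mem_coe, Finset.mem_filter, Finset.mem_univ, true_and] at hk
      have hrev : ((Fin.revPerm k : Fin n) : ℕ) = n - 1 - (k : ℕ) := by
        simp [Fin.val_rev]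
        omega
      refine Finset.mem_Icc.mpr ⟨?_, ?_⟩
      · show n - 1 - i ≤ (k : ℕ)
        omega
      · show (k : ℕ) ≤ i
        omega
    · exact fun x _ y _ h => Fin.val_injective h
  rw [Nat.card_Icc] at hLHS
  rw [hXY]
  omega

lemma sum_lam_le (lam : Fin n → ℝ)
    (hmono : ∀ i j : Fin n, i ≤ j → lam j ≤ lam i) (M₁ M₂ : Fin n → Fin n)
    (hcount : ∀ i : ℕ, i < n →
      (univ.filter fun k => ((M₂ k : Fin n) : ℕ) ≤ i).card ≤
      (univ.filter fun k => ((M₁ k : Fin n) : ℕ) ≤ i).card) :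
    ∑ k : Fin n, lam (M₂ k) ≤ ∑ k : Fin n, lam (M₁ k) := by
  classical
  rcases n with _ | m
  · simp
  set L : ℕ → ℝ := fun i => lam ⟨min i m, by omega⟩ with hLdef
  have hL : ∀ x : Fin (m+1), lam x = L m + ∑ i ∈ Ico (x : ℕ) m, (L i - L (i+1)) := by
    intro x
    have hx : (x : ℕ) ≤ m := by omega
    rw [Finset.sum_Ico_eq_sub _ hx, Finset.sum_range_sub' L, Finset.sum_range_sub' L]
    have h1 : (⟨min (x : ℕ) m, by omega⟩ : Fin (m+1)) = x := by
      apply Fin.ext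
      simp
      omega
    simp only [hLdef]
    rw [h1]
    ring
  have key : ∀ M : Fin (m+1) → Fin (m+1), ∑ k : Fin (m+1), lam (M k) =
      (m+1 : ℝ) * L m + ∑ i ∈ range m,
        ((univ.filter fun k => ((M k : Fin (m+1)) : ℕ) ≤ i).card : ℝ) * (L i - L (i+1)) := by
    intro M
    have hterm : ∀ k : Fin (m+1), lam (M k) =
        L m + ∑ i ∈ range m, (if ((M k : Fin (m+1)) : ℕ) ≤ i then (L i - L (i+1)) else 0) := by
      intro k
      rw [hL (M k)]
      congr 1
      rw [← Finset.sum_filter]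
      congr 1
      ext i
      simp only [Finset.mem_Ico, Finset.mem_filter, Finset.mem_range]
      omega
    rw [Finset.sum_congr rfl (fun k _ => hterm k), Finset.sum_add_distrib,
        Finset.sum_const, Finset.sum_comm]
    congr 1
    · simp [nsmul_eq_mul]
    · apply Finset.sum_congr rfl
      intro i _
      rw [← Finset.sum_filter, Finset.sum_const, nsmul_eq_mul]
  rw [key M₁, key M₂]
  apply add_le_add (le_refl _)
  apply Finset.sum_le_sum
  intro i hi
  rw [Finset.mem_range] at hi
  apply mul_le_mul_of_nonneg_right
  · exact_mod_cast hcount i (by omega)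
  · have h : lam ⟨min (i+1) m, by omega⟩ ≤ lam ⟨min i m, by omega⟩ :=
      hmono _ _ (by rw [Fin.le_def]; simp)
    simp only [hLdef]
    linarith

lemma Phi_eq_sup (lam : Fin n → ℝ) (hmono : ∀ i j : Fin n, i ≤ j → lam j ≤ lam i)
    (σ : Equiv.Perm (Fin n)) :
    Phi lam σ = 2 * ∑ k : Fin n, lam k - 2 * ∑ k : Fin n, lam (k ⊔ σ k) := by
  unfold Phi
  have hterm : ∀ k : Fin n, |lam k - lam (σ k)| = lam k + lam (σ k) - 2 * lam (k ⊔ σ k) := by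
    intro k
    rcases le_total k (σ k) with h | h
    · rw [sup_eq_right.mpr h, abs_of_nonneg (by linarith [hmono k (σ k) h])]
      ring
    · rw [sup_eq_left.mpr h, abs_of_nonpos (by linarith [hmono (σ k) k h])]
      ring
  rw [Finset.sum_congr rfl (fun k _ => hterm k)]
  have e1 : ∑ k : Fin n, (lam k + lam (σ k) - 2 * lam (k ⊔ σ k))
      = (∑ k : Fin n, lam k + ∑ k : Fin n, lam (σ k)) - 2 * ∑ k : Fin n, lam (k ⊔ σ k) := by
    rw [Finset.sum_sub_distrib, Finset.sum_add_distrib, Finset.mul_sum]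
  rw [e1, Equiv.sum_comp σ lam]
  ring

lemma Phi_le_rev (lam : Fin n → ℝ) (hmono : ∀ i j : Fin n, i ≤ j → lam j ≤ lam i)
    (σ : Equiv.Perm (Fin n)) :
    Phi lam σ ≤ Phi lam (Fin.revPerm : Equiv.Perm (Fin n)) := by
  rw [Phi_eq_sup lam hmono σ, Phi_eq_sup lam hmono Fin.revPerm]
  have h := sum_lam_le lam hmono (fun k => k ⊔ σ k) (fun k => k ⊔ Fin.revPerm k)
    (fun i hi => count_le σ i hi)
  linarith

lemma cayleyDist_eq (lam : Fin n → ℝ) (hmono : ∀ i j : Fin n, i ≤ j → lam j ≤ lam i)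
    (σ : Equiv.Perm (Fin n)) :
    cayleyDist n lam σ = (1/2) * Phi lam σ := by
  apply IsLeast.csInf_eq
  constructor
  · obtain ⟨l, h1, h2, h3⟩ := exists_factorization lam hmono
      ((∑ k : Fin n, Nat.dist ((σ k) : ℕ) (k : ℕ)) + 1) σ (Nat.lt_succ_self _)
    exact ⟨l, h1, h2, h3.symm⟩
  · rintro s ⟨l, -, hprod, rfl⟩
    have h := Phi_le_two_weight lam l
    rw [hprod] at h
    linarith

end Stmt19Aux

/-- For `λ₁ ≥ λ₂ ≥ … ≥ λ_n`, the reversal permutation `w₀(i) = n + 1 − i` satisfies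
`d(w₀) = (1/2) ∑_k |λ_k − λ_{n+1−k}|` and `d(σ) ≤ d(w₀)` for every `σ`; i.e. the
diameter of the weighted Cayley graph of `S_n` generated by all transpositions
equals `(1/2) ∑_k |λ_k − λ_{n+1−k}|`. -/

theorem stmt_19 (n : ℕ) (lam : Fin n → ℝ)
    (hmono : ∀ i j : Fin n, i ≤ j → lam j ≤ lam i) :
    cayleyDist n lam Fin.revPerm = (1 / 2) * ∑ k : Fin n, |lam k - lam k.rev|
    ∧ ∀ σ : Equiv.Perm (Fin n), cayleyDist n lam σ ≤ cayleyDist n lam Fin.revPerm := by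
  constructor
  · rw [Stmt19Aux.cayleyDist_eq lam hmono]
    congr 1
  · intro σ
    rw [Stmt19Aux.cayleyDist_eq lam hmono σ, Stmt19Aux.cayleyDist_eq lam hmono Fin.revPerm]
    have h := Stmt19Aux.Phi_le_rev lam hmono σ
    linarith
end
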